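/- arXiv:2304.07377 — 2 statements merged into one kernel-verified Lean document; each statement's English description precedes it below -/
import Mathlib

section
/- If g is (κ,M)-Lipschitz and X ~ N(0,M), then Var(g(X)) ≤ κ² tr(M). -/
/-!
Take `Y = X` and `Y' = 0` in the definition of `(κ, M)`-Lipschitz: the joint covariance is
`fromBlocks M 0 0 0`, whose diagonal blocks are `⪯ M`, so `E (g X - g 0)² ≤ κ² E ‖X‖² = κ² tr M`.
The variance is the least mean squared deviation from a constant, in particular from `g 0`.
-/

open MeasureTheory Matrix

/-- A random vector `X` indexed by `ι` is centered Gaussian with covariance matrix `S` if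
every linear functional of `X` has a centered one-dimensional Gaussian distribution with
the corresponding variance. -/
def IsCenteredGaussian {Ω ι : Type*} [MeasurableSpace Ω] [Fintype ι]
    (μ : Measure Ω) (X : Ω → ι → ℝ) (S : Matrix ι ι ℝ) : Prop :=
  ∀ l : ι → ℝ,
    Measure.map (fun ω => ∑ i, l i * X ω i) μ =
      ProbabilityTheory.gaussianReal 0 (Real.toNNReal (l ⬝ᵥ S.mulVec l))

/-- `g` is `(κ, M)`-Lipschitz: for every `2d`-dimensional centered Gaussian vector `(Y, Y')`
with `Cov Y ⪯ M` and `Cov Y' ⪯ M`, `E((g(Y) - g(Y'))²) ≤ κ² E(‖Y - Y'‖²)`. -/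
def IsKMLipschitz {d : ℕ} (κ : ℝ) (M : Matrix (Fin d) (Fin d) ℝ)
    (g : (Fin d → ℝ) → ℝ) : Prop :=
  ∀ (Ω : Type) (_ : MeasurableSpace Ω) (μ : Measure Ω), IsProbabilityMeasure μ →
    ∀ (Y Y' : Ω → Fin d → ℝ) (S : Matrix (Fin d ⊕ Fin d) (Fin d ⊕ Fin d) ℝ),
      Measurable Y → Measurable Y' →
      IsCenteredGaussian μ (fun ω => Sum.elim (Y ω) (Y' ω)) S →
      (M - Matrix.of fun i j => S (Sum.inl i) (Sum.inl j)).PosSemidef →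
      (M - Matrix.of fun i j => S (Sum.inr i) (Sum.inr j)).PosSemidef →
      ∫ ω, (g (Y ω) - g (Y' ω)) ^ 2 ∂μ ≤ κ ^ 2 * ∫ ω, ∑ j, (Y ω j - Y' ω j) ^ 2 ∂μ

open scoped NNReal
open ProbabilityTheory

lemma integral_sq_gaussianReal_zero (v : ℝ≥0) : ∫ x, x ^ 2 ∂gaussianReal 0 v = v := by
  rw [← variance_of_integral_eq_zero aemeasurable_id' integral_id_gaussianReal,
    variance_fun_id_gaussianReal]

lemma integrable_sq_gaussianReal (μ : ℝ) (v : ℝ≥0) :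
    Integrable (fun x => x ^ 2) (gaussianReal μ v) :=
  (memLp_id_gaussianReal 2).integrable_sq

lemma variance_le_integral_sub_sq {Ω : Type*} [MeasurableSpace Ω] {μ : Measure Ω}
    [IsProbabilityMeasure μ] {X : Ω → ℝ} (hX : AEStronglyMeasurable X μ) (c : ℝ) :
    variance X μ ≤ ∫ ω, (X ω - c) ^ 2 ∂μ := by
  rw [← variance_sub_const hX c]
  exact variance_le_expectation_sq (hX.sub aestronglyMeasurable_const)

namespace IsCenteredGaussian

variable {Ω ι : Type*} [MeasurableSpace Ω] [Fintype ι] {μ : Measure Ω} {X : Ω → ι → ℝ}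
  {S : Matrix ι ι ℝ}

lemma map_apply [DecidableEq ι] (hX : IsCenteredGaussian μ X S) (i : ι) :
    μ.map (fun ω => X ω i) = gaussianReal 0 (S i i).toNNReal := by
  simpa [Pi.single_apply] using hX (Pi.single i 1)

lemma integrable_sq_apply (hX : IsCenteredGaussian μ X S) (hXm : Measurable X) (i : ι) :
    Integrable (fun ω => X ω i ^ 2) μ := by
  classical
  have hXi : Measurable fun ω => X ω i := (measurable_pi_apply i).comp hXm
  have h := integrable_sq_gaussianReal 0 (S i i).toNNReal
  rw [← hX.map_apply i] at h
  exact (integrable_map_measure (by fun_prop) hXi.aemeasurable).mp h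

lemma integral_sq_apply (hX : IsCenteredGaussian μ X S) (hXm : Measurable X) {i : ι}
    (hSi : 0 ≤ S i i) : ∫ ω, X ω i ^ 2 ∂μ = S i i := by
  classical
  have hXi : Measurable fun ω => X ω i := (measurable_pi_apply i).comp hXm
  have h := integral_sq_gaussianReal_zero (S i i).toNNReal
  rwa [← hX.map_apply i, integral_map hXi.aemeasurable (by fun_prop),
    Real.coe_toNNReal _ hSi] at h

lemma integral_sum_sq (hX : IsCenteredGaussian μ X S) (hXm : Measurable X) (hS : S.PosSemidef) :
    ∫ ω, ∑ i, X ω i ^ 2 ∂μ = S.trace := by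
  rw [integral_finsetSum _ fun i _ => hX.integrable_sq_apply hXm i, Matrix.trace]
  exact Finset.sum_congr rfl fun i _ => hX.integral_sq_apply hXm hS.diag_nonneg

lemma sum_elim_zero {ι' : Type*} [Fintype ι'] (hX : IsCenteredGaussian μ X S) :
    IsCenteredGaussian μ (fun ω => Sum.elim (X ω) (0 : ι' → ℝ))
      (fromBlocks S 0 0 (0 : Matrix ι' ι' ℝ)) := by
  intro l
  have hsum : (fun ω => ∑ i, l i * Sum.elim (X ω) (0 : ι' → ℝ) i)
      = fun ω => ∑ i, (l ∘ Sum.inl) i * X ω i := by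
    funext ω; simp [Fintype.sum_sum_type]
  have hquad : l ⬝ᵥ (fromBlocks S 0 0 (0 : Matrix ι' ι' ℝ)) *ᵥ l
      = (l ∘ Sum.inl) ⬝ᵥ S *ᵥ (l ∘ Sum.inl) := by
    simp [dotProduct, mulVec, Fintype.sum_sum_type, fromBlocks]
  rw [hsum, hquad]
  exact hX _

end IsCenteredGaussian

lemma IsKMLipschitz.integral_sq_sub_apply_zero_le {d : ℕ} {κ : ℝ} {M : Matrix (Fin d) (Fin d) ℝ}
    {g : (Fin d → ℝ) → ℝ} (hg : IsKMLipschitz κ M g) (hM : M.PosSemidef)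
    {Ω : Type} [MeasurableSpace Ω] {μ : Measure Ω} [IsProbabilityMeasure μ]
    {X : Ω → Fin d → ℝ} (hXm : Measurable X) (hX : IsCenteredGaussian μ X M) :
    ∫ ω, (g (X ω) - g 0) ^ 2 ∂μ ≤ κ ^ 2 * M.trace := by
  have h := hg Ω _ μ inferInstance X 0 _ hXm measurable_const hX.sum_elim_zero
    (show (M - M).PosSemidef by rw [sub_self]; exact .zero)
    (show (M - 0).PosSemidef by rwa [sub_zero])
  simpa only [Pi.zero_apply, sub_zero, hX.integral_sum_sq hXm hM] using h

theorem stmt_3_general {d : ℕ} (M : Matrix (Fin d) (Fin d) ℝ) (hM : M.PosSemidef)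
    (g : (Fin d → ℝ) → ℝ) (hgm : Measurable g)
    (κ : ℝ) (hg : IsKMLipschitz κ M g)
    {Ω : Type} [MeasurableSpace Ω] (μ : Measure Ω) [IsProbabilityMeasure μ]
    (X : Ω → Fin d → ℝ) (hXm : Measurable X) (hX : IsCenteredGaussian μ X M) :
    ProbabilityTheory.variance (fun ω => g (X ω)) μ ≤ κ ^ 2 * M.trace :=
  (variance_le_integral_sub_sq (hgm.comp hXm).aestronglyMeasurable (g 0)).trans
    (hg.integral_sq_sub_apply_zero_le hM hXm hX)

/-- If `g` is `(κ, M)`-Lipschitz and `X ~ N(0, M)`, then `Var(g(X)) ≤ κ² tr M`. -/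
theorem stmt_3 {d : ℕ} (M : Matrix (Fin d) (Fin d) ℝ) (hM : M.PosSemidef)
    (g : (Fin d → ℝ) → ℝ) (hgm : Measurable g)
    (κ : ℝ) (hκ : 0 ≤ κ) (hg : IsKMLipschitz κ M g)
    {Ω : Type} [MeasurableSpace Ω] (μ : Measure Ω) [IsProbabilityMeasure μ]
    (X : Ω → Fin d → ℝ) (hXm : Measurable X) (hX : IsCenteredGaussian μ X M)
    (hL2 : MemLp (fun ω => g (X ω)) 2 μ) :
    ProbabilityTheory.variance (fun ω => g (X ω)) μ ≤ κ ^ 2 * M.trace :=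
  stmt_3_general M hM g hgm κ hg μ X hXm hX
end

section
/- Let U, U', U'' be i.i.d. d-dimensional vectors of independent random variables, and for 0 ≤ i ≤ d define C(i) = Cov(f(U), f(W_i)) where W_i = (U'_1,...,U'_i, U_{i+1},...,U_d). Then C(i) is a decreasing function of i; in particular C(i+1) ≤ C(i) for 0 ≤ i ≤ d-1. -/
/-!
Write `g_s = marginalIntegral μ s f`, i.e. `g_s(x) = ∫ f(x with the coordinates in s resampled)`,
the conditional expectation of `f` given the coordinates outside `s`. Fubini turns
`∫ f(U) f(W_s)` into `∫ f g_s`, and the invariance of `g_s` under resampling any `t ⊆ s` gives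
`∫ g_s g_s = ∫ g_s g_t = ∫ g_s f`. Hence for `t ⊆ s`, `0 ≤ ∫ (g_t - g_s)² = ∫ g_t f - ∫ g_s f`:
resampling more coordinates can only decrease the covariance, and `W_i` resamples the
increasing sets `{j | j < i}`.
-/

open MeasureTheory

theorem Set.piecewise_piecewise_of_subset {ι : Type*} {α : ι → Type*} {s t : Set ι}
    [DecidablePred (· ∈ s)] [DecidablePred (· ∈ t)] (hts : t ⊆ s) (x y z : ∀ i, α i) :
    s.piecewise z (t.piecewise y x) = s.piecewise z x := by
  ext i
  by_cases hs : i ∈ s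
  · simp [hs]
  · simp [hs, Set.piecewise_eq_of_notMem t y x (fun ht => hs (hts ht))]

namespace MeasureTheory

theorem integral_mul_le_integral_mul_of_projections {X : Type*} [MeasurableSpace X]
    {μ : Measure X} {a b f : X → ℝ} (ha : MemLp a 2 μ) (hb : MemLp b 2 μ)
    (haa : ∫ x, a x * a x ∂μ = ∫ x, a x * f x ∂μ) (hab : ∫ x, a x * b x ∂μ = ∫ x, a x * f x ∂μ)
    (hbb : ∫ x, b x * b x ∂μ = ∫ x, b x * f x ∂μ) :
    ∫ x, a x * f x ∂μ ≤ ∫ x, b x * f x ∂μ := by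
  have hexpand : ∫ x, (b x - a x) ^ 2 ∂μ
      = ∫ x, b x * b x ∂μ - 2 * ∫ x, a x * b x ∂μ + ∫ x, a x * a x ∂μ := by
    have hbb' : Integrable (fun x => b x * b x) μ := hb.integrable_mul hb
    have hab' : Integrable (fun x => 2 * (a x * b x)) μ := (ha.integrable_mul hb).const_mul 2
    have haa' : Integrable (fun x => a x * a x) μ := ha.integrable_mul ha
    have hsub : Integrable (fun x => b x * b x - 2 * (a x * b x)) μ := hbb'.sub hab'
    rw [← integral_const_mul, ← integral_sub hbb' hab', ← integral_add hsub haa']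
    congr 1 with x
    ring
  have hnonneg : 0 ≤ ∫ x, (b x - a x) ^ 2 ∂μ := integral_nonneg fun x => sq_nonneg _
  linarith

section Resampling

variable {X Y : Type*} [MeasurableSpace X] [MeasurableSpace Y] {μ : Measure X} {ν : Measure Y}

theorem sq_integral_le_integral_sq [IsProbabilityMeasure μ] {g : X → ℝ} (hg : Integrable g μ)
    (hg2 : Integrable (fun x => g x ^ 2) μ) : (∫ x, g x ∂μ) ^ 2 ≤ ∫ x, g x ^ 2 ∂μ :=
  (even_two.convexOn_pow).map_integral_le (continuous_pow 2).continuousOn isClosed_univ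
    (ae_of_all _ fun _ => Set.mem_univ _) hg hg2

theorem MemLp.integral_prod_left_two [IsFiniteMeasure μ] [IsProbabilityMeasure ν]
    {h : X × Y → ℝ} (hh : MemLp h 2 (μ.prod ν)) :
    MemLp (fun x => ∫ y, h (x, y) ∂ν) 2 μ := by
  have hsq : Integrable (fun p => h p ^ 2) (μ.prod ν) := hh.integrable_sq
  have hh1 : Integrable h (μ.prod ν) := hh.integrable one_le_two
  have hm := hh.aestronglyMeasurable.integral_prod_right'
  refine (memLp_two_iff_integrable_sq hm).2 (hsq.integral_prod_left.mono' (hm.pow 2) ?_)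
  filter_upwards [hh1.prod_right_ae, hsq.prod_right_ae] with x hx hx2
  rw [Real.norm_eq_abs, abs_of_nonneg (sq_nonneg _)]
  exact sq_integral_le_integral_sq hx hx2

variable {σ : X × Y → X} (hσ : MeasurePreserving σ (μ.prod ν) μ)
include hσ

theorem MeasurePreserving.integral_mul_comp_eq_integral_mul_integral [SFinite μ]
    [IsProbabilityMeasure ν] {φ f : X → ℝ} (hφ : MemLp φ 2 μ) (hf : MemLp f 2 μ) :
    ∫ p, φ p.1 * f (σ p) ∂μ.prod ν = ∫ x, φ x * ∫ y, f (σ (x, y)) ∂ν ∂μ := by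
  have hint : Integrable (fun p => φ p.1 * f (σ p)) (μ.prod ν) :=
    (hφ.comp_measurePreserving measurePreserving_fst).integrable_mul
      (hf.comp_measurePreserving hσ)
  rw [integral_prod _ hint]
  simp only [integral_const_mul]

theorem MeasurePreserving.integral_mul_comp_of_invariant {φ f : X → ℝ}
    (hφ : MemLp φ 2 μ) (hf : MemLp f 2 μ) (hinv : ∀ p, φ (σ p) = φ p.1) :
    ∫ p, φ p.1 * f (σ p) ∂μ.prod ν = ∫ x, φ x * f x ∂μ := by
  have h := integral_map (f := fun x => φ x * f x) hσ.aemeasurable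
    (by rw [hσ.map_eq]; exact (hφ.integrable_mul hf).1)
  rw [hσ.map_eq] at h
  simp_rw [← hinv]
  exact h.symm

theorem MeasurePreserving.integral_mul_integral_comp_of_invariant [SFinite μ]
    [IsProbabilityMeasure ν] {φ f : X → ℝ} (hφ : MemLp φ 2 μ) (hf : MemLp f 2 μ)
    (hinv : ∀ p, φ (σ p) = φ p.1) :
    ∫ x, φ x * ∫ y, f (σ (x, y)) ∂ν ∂μ = ∫ x, φ x * f x ∂μ :=
  (hσ.integral_mul_comp_eq_integral_mul_integral hφ hf).symm.trans
    (hσ.integral_mul_comp_of_invariant hφ hf hinv)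

end Resampling

section Piecewise

variable {ι : Type*} [Fintype ι] {α : ι → Type*} [∀ i, MeasurableSpace (α i)]
  (μ : ∀ i, Measure (α i))

noncomputable def marginalIntegral (s : Set ι) [DecidablePred (· ∈ s)] (f : (∀ i, α i) → ℝ)
    (x : ∀ i, α i) : ℝ :=
  ∫ y, f (s.piecewise y x) ∂Measure.pi μ

variable {μ}

theorem marginalIntegral_piecewise_of_subset {s t : Set ι} [DecidablePred (· ∈ s)]
    [DecidablePred (· ∈ t)] (hts : t ⊆ s) (f : (∀ i, α i) → ℝ) (x y : ∀ i, α i) :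
    marginalIntegral μ s f (t.piecewise y x) = marginalIntegral μ s f x := by
  simp only [marginalIntegral, Set.piecewise_piecewise_of_subset hts]

variable (μ) [∀ i, IsProbabilityMeasure (μ i)]

theorem measurePreserving_piecewise (s : Set ι) [DecidablePred (· ∈ s)] :
    MeasurePreserving (fun p : (∀ i, α i) × (∀ i, α i) => s.piecewise p.2 p.1)
      ((Measure.pi μ).prod (Measure.pi μ)) (Measure.pi μ) := by
  set e := MeasurableEquiv.piEquivPiSubtypeProd α (· ∈ s)
  have he := measurePreserving_piEquivPiSubtypeProd μ (· ∈ s)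
  -- take the coordinates in `s` from `p.2` and the others from `p.1`
  have hmix : MeasurePreserving (e.symm ∘ Prod.map Prod.fst Prod.snd ∘ Prod.swap ∘ Prod.map e e)
      ((Measure.pi μ).prod (Measure.pi μ)) (Measure.pi μ) :=
    (he.symm.comp (measurePreserving_fst.prod measurePreserving_snd)).comp
      (Measure.measurePreserving_swap.comp (he.prod he))
  convert hmix using 2 with p
  ext i
  by_cases hs : i ∈ s <;>
    simp [hs, e, MeasurableEquiv.piEquivPiSubtypeProd, Equiv.piEquivPiSubtypeProd]

variable {μ}

theorem MemLp.marginalIntegral {f : (∀ i, α i) → ℝ} (hf : MemLp f 2 (Measure.pi μ))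
    (s : Set ι) [DecidablePred (· ∈ s)] : MemLp (marginalIntegral μ s f) 2 (Measure.pi μ) :=
  (hf.comp_measurePreserving (measurePreserving_piecewise μ s)).integral_prod_left_two

theorem integral_mul_piecewise_le_of_subset {f : (∀ i, α i) → ℝ} (hf : MemLp f 2 (Measure.pi μ))
    {s t : Set ι} [DecidablePred (· ∈ s)] [DecidablePred (· ∈ t)] (hts : t ⊆ s) :
    ∫ p, f p.1 * f (s.piecewise p.2 p.1) ∂(Measure.pi μ).prod (Measure.pi μ)
      ≤ ∫ p, f p.1 * f (t.piecewise p.2 p.1) ∂(Measure.pi μ).prod (Measure.pi μ) := by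
  have hσs := measurePreserving_piecewise μ s
  have hσt := measurePreserving_piecewise μ t
  have hgs := hf.marginalIntegral s
  have hgt := hf.marginalIntegral t
  rw [hσs.integral_mul_comp_eq_integral_mul_integral hf hf,
    hσt.integral_mul_comp_eq_integral_mul_integral hf hf]
  simp_rw [mul_comm (f _)]
  exact integral_mul_le_integral_mul_of_projections hgs hgt
    (hσs.integral_mul_integral_comp_of_invariant hgs hf fun p =>
      marginalIntegral_piecewise_of_subset subset_rfl f p.1 p.2)
    (hσt.integral_mul_integral_comp_of_invariant hgs hf fun p =>
      marginalIntegral_piecewise_of_subset hts f p.1 p.2)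
    (hσt.integral_mul_integral_comp_of_invariant hgt hf fun p =>
      marginalIntegral_piecewise_of_subset subset_rfl f p.1 p.2)

end Piecewise

end MeasureTheory

theorem stmt_4_general {d : ℕ} {F : Type*} [MeasurableSpace F] (ν : Fin d → Measure F)
    [∀ k, IsProbabilityMeasure (ν k)]
    (f : (Fin d → F) → ℝ)
    (hf2 : MemLp f 2 (Measure.pi ν))
    (C : ℕ → ℝ)
    (hC : ∀ i, C i =
      (∫ p, f p.1 * f (fun j : Fin d => if (j : ℕ) < i then p.2 j else p.1 j)
          ∂(Measure.pi ν).prod (Measure.pi ν))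
        - (∫ x, f x ∂Measure.pi ν) * ∫ x, f x ∂Measure.pi ν) :
    (∀ i j, i ≤ j → j ≤ d → C j ≤ C i) ∧ ∀ i < d, C (i + 1) ≤ C i := by
  have hanti : ∀ i j, i ≤ j → C j ≤ C i := by
    intro i j hij
    rw [hC i, hC j, sub_le_sub_iff_right]
    exact integral_mul_piecewise_le_of_subset hf2 (s := {k : Fin d | (k : ℕ) < j})
      (t := {k : Fin d | (k : ℕ) < i}) fun k (hk : (k : ℕ) < i) => hk.trans_le hij
  exact ⟨fun i j hij _ => hanti i j hij, fun i _ => hanti i (i + 1) i.le_succ⟩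

/-- Let `U` and `U'` be independent vectors, each with independent components distributed
according to `ν`, realized as the two coordinates of the product space.  For
`C(i) = Cov(f(U), f(W_i))`, where `W_i` agrees with `U'` on the first `i` components and
with `U` on the rest, `C` is decreasing in `i`; in particular `C (i+1) ≤ C i`. -/
theorem stmt_4 {d : ℕ} {F : Type*} [MeasurableSpace F] (ν : Fin d → Measure F)
    [∀ k, IsProbabilityMeasure (ν k)]
    (f : (Fin d → F) → ℝ) (hfm : Measurable f)
    (hf2 : MemLp f 2 (Measure.pi ν))
    (C : ℕ → ℝ)
    (hC : ∀ i, C i =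
      (∫ p, f p.1 * f (fun j : Fin d => if (j : ℕ) < i then p.2 j else p.1 j)
          ∂(Measure.pi ν).prod (Measure.pi ν))
        - (∫ x, f x ∂Measure.pi ν) * ∫ x, f x ∂Measure.pi ν) :
    (∀ i j, i ≤ j → j ≤ d → C j ≤ C i) ∧ ∀ i < d, C (i + 1) ≤ C i :=
  stmt_4_general ν f hf2 C hC
end
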